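/- Combined narrowing–promotion is equivariant: let σ ∈ S_m be a permutation mapping the set {i_1,…,i_k} onto itself. Then for every f : S_m → ℝ^d, ((f^{(σ)})↓_{(i_1,…,i_k)})↑^{(1,…,m)} = ((f↓_{(i_1,…,i_k)})↑^{(1,…,m)})^{(σ)}. -/

import Mathlib

/-- `σ ∈ S_m|_{(i_1,…,i_k)}`: the permutation `σ` of `{1,…,m}` sends each of the
first `k` positions into the set `{i_1,…,i_k}`. -/
def IsRestricted {m k : ℕ} (hkm : k ≤ m) (i : Fin k → Fin m) (σ : Equiv.Perm (Fin m)) : Prop :=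
  ∀ p : Fin k, σ (Fin.castLE hkm p) ∈ Set.range i

-- The restricted permutation `σ↓_{(i_1,…,i_k)}` as a function `{1,…,k} → {1,…,k}`:
-- `σ↓(p) = q` iff `σ(p) = i_q` (well defined when `σ` is restricted and `i` is injective).
noncomputable def restrictFun {m k : ℕ} (hk : 1 ≤ k) (hkm : k ≤ m) (i : Fin k → Fin m)
    (σ : Equiv.Perm (Fin m)) : Fin k → Fin k :=
  haveI : Nonempty (Fin k) := ⟨⟨0, hk⟩⟩
  fun p => Function.invFun i (σ (Fin.castLE hkm p))

-- The restricted permutation `σ↓_{(i_1,…,i_k)}` as an element of `S_k`.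
noncomputable def restrictPerm {m k : ℕ} (hk : 1 ≤ k) (hkm : k ≤ m) (i : Fin k → Fin m)
    (σ : Equiv.Perm (Fin m)) : Equiv.Perm (Fin k) :=
  if h : Function.Bijective (restrictFun hk hkm i σ) then Equiv.ofBijective _ h else 1

-- Narrowing: `f↓_{(i_1,…,i_k)}(ω) = (m−k)!⁻¹ · Σ_{τ restricted, τ↓ = ω} f(τ)`.
open Classical in
noncomputable def narrow {m k : ℕ} (hk : 1 ≤ k) (hkm : k ≤ m) (i : Fin k → Fin m)
    {V : Type*} [AddCommGroup V] [Module ℝ V]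
    (f : Equiv.Perm (Fin m) → V) (ω : Equiv.Perm (Fin k)) : V :=
  ((m - k).factorial : ℝ)⁻¹ •
    ∑ τ : Equiv.Perm (Fin m),
      if IsRestricted hkm i τ ∧ restrictFun hk hkm i τ = ⇑ω then f τ else 0

-- Promotion: `g↑^{(1,…,m)}(τ) = g(τ↓)` if `τ` is restricted, and `0` otherwise.
open Classical in
noncomputable def promote {m k : ℕ} (hk : 1 ≤ k) (hkm : k ≤ m) (i : Fin k → Fin m)
    {V : Type*} [AddCommGroup V] [Module ℝ V]
    (g : Equiv.Perm (Fin k) → V) (τ : Equiv.Perm (Fin m)) : V :=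
  if IsRestricted hkm i τ then g (restrictPerm hk hkm i τ) else 0

/-- Left translation: `h^{(τ)}(π) = h(τ⁻¹ π)`. -/
def lTranslate {G V : Type*} [Group G] (τ : G) (h : G → V) : G → V :=
  fun π => h (τ⁻¹ * π)

/-!
A permutation `σ` of `Fin m` preserving `{i_1,…,i_k}` induces, through `i`, a permutation `ρ`
of `Fin k` with `i (ρ q) = σ (i q)`. Left multiplication by `σ` preserves the restricted
permutations and acts on their restrictions as left multiplication by `ρ`,
i.e. `(στ)↓ = ρ τ↓`. Hence narrowing intertwines translation by `σ` with translation by `ρ`,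
and promotion intertwines translation by `ρ` with translation by `σ`; composing the two
gives the claim.
-/

open Function Set Equiv

noncomputable def inducedPerm {α β : Type*} {i : α → β} (hi : Injective i) (σ : Perm β)
    (hσ : ∀ x, σ x ∈ range i ↔ x ∈ range i) : Perm α :=
  (Equiv.ofInjective i hi).symm.permCongr (σ.subtypePerm hσ)

theorem apply_inducedPerm {α β : Type*} {i : α → β} (hi : Injective i) {σ : Perm β}
    (hσ : ∀ x, σ x ∈ range i ↔ x ∈ range i) (a : α) :
    i (inducedPerm hi σ hσ a) = σ (i a) := by
  simp [inducedPerm, Equiv.apply_ofInjective_symm]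

section Restriction

variable {m k : ℕ} (hk : 1 ≤ k) (hkm : k ≤ m) {i : Fin k → Fin m}

theorem IsRestricted.mul_iff {σ : Perm (Fin m)} (hσ : ∀ x, σ x ∈ range i ↔ x ∈ range i)
    {τ : Perm (Fin m)} : IsRestricted hkm i (σ * τ) ↔ IsRestricted hkm i τ :=
  forall_congr' fun _ => hσ _

theorem IsRestricted.inv_mul_iff {σ : Perm (Fin m)} (hσ : ∀ x, σ x ∈ range i ↔ x ∈ range i)
    {τ : Perm (Fin m)} : IsRestricted hkm i (σ⁻¹ * τ) ↔ IsRestricted hkm i τ := by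
  rw [← IsRestricted.mul_iff hkm hσ, mul_inv_cancel_left]

theorem apply_restrictFun {τ : Perm (Fin m)} (hτ : IsRestricted hkm i τ) (p : Fin k) :
    i (restrictFun hk hkm i τ p) = τ (Fin.castLE hkm p) := by
  have : Nonempty (Fin k) := ⟨⟨0, hk⟩⟩
  exact invFun_eq (hτ p)

theorem restrictFun_mul (hi : Injective i) {σ : Perm (Fin m)}
    (hσ : ∀ x, σ x ∈ range i ↔ x ∈ range i) {τ : Perm (Fin m)} (hτ : IsRestricted hkm i τ) :
    restrictFun hk hkm i (σ * τ) = inducedPerm hi σ hσ ∘ restrictFun hk hkm i τ := by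
  funext p
  apply hi
  rw [comp_apply, apply_inducedPerm hi hσ, apply_restrictFun hk hkm hτ,
    apply_restrictFun hk hkm ((IsRestricted.mul_iff hkm hσ).2 hτ), Perm.mul_apply]

theorem coe_restrictPerm {τ : Perm (Fin m)} (hτ : IsRestricted hkm i τ) :
    ⇑(restrictPerm hk hkm i τ) = restrictFun hk hkm i τ := by
  have hinj : Injective (restrictFun hk hkm i τ) := by
    intro p q hpq
    have := congrArg i hpq
    rw [apply_restrictFun hk hkm hτ, apply_restrictFun hk hkm hτ] at this
    exact Fin.castLE_injective hkm (τ.injective this)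
  rw [restrictPerm, dif_pos (Finite.injective_iff_bijective.1 hinj)]
  rfl

theorem restrictPerm_mul (hi : Injective i) {σ : Perm (Fin m)}
    (hσ : ∀ x, σ x ∈ range i ↔ x ∈ range i) {τ : Perm (Fin m)} (hτ : IsRestricted hkm i τ) :
    restrictPerm hk hkm i (σ * τ) = inducedPerm hi σ hσ * restrictPerm hk hkm i τ := by
  apply DFunLike.coe_injective
  rw [Perm.coe_mul, coe_restrictPerm hk hkm hτ,
    coe_restrictPerm hk hkm ((IsRestricted.mul_iff hkm hσ).2 hτ), restrictFun_mul hk hkm hi hσ hτ]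

variable {V : Type*} [AddCommGroup V] [Module ℝ V]

theorem narrow_lTranslate (hi : Injective i) {σ : Perm (Fin m)}
    (hσ : ∀ x, σ x ∈ range i ↔ x ∈ range i) (f : Perm (Fin m) → V) :
    narrow hk hkm i (lTranslate σ f) = lTranslate (inducedPerm hi σ hσ) (narrow hk hkm i f) := by
  classical
  funext ω
  simp only [narrow, lTranslate]
  congr 1
  rw [← Equiv.sum_comp (Equiv.mulLeft σ)]
  refine Finset.sum_congr rfl fun τ _ => ?_
  simp only [Equiv.coe_mulLeft, inv_mul_cancel_left, IsRestricted.mul_iff hkm hσ]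
  by_cases hτ : IsRestricted hkm i τ
  · have hcomp : ⇑(inducedPerm hi σ hσ) ∘ restrictFun hk hkm i τ = ω ↔
        restrictFun hk hkm i τ = ⇑(inducedPerm hi σ hσ)⁻¹ ∘ ω := by
      rw [Perm.inv_def, Equiv.eq_symm_comp]
    simp only [restrictFun_mul hk hkm hi hσ hτ, Perm.coe_mul, hcomp, hτ, true_and]
  · simp only [hτ, false_and, if_false]

theorem promote_lTranslate (hi : Injective i) {σ : Perm (Fin m)}
    (hσ : ∀ x, σ x ∈ range i ↔ x ∈ range i) (g : Perm (Fin k) → V) :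
    promote hk hkm i (lTranslate (inducedPerm hi σ hσ) g) = lTranslate σ (promote hk hkm i g) := by
  funext τ
  simp only [promote, lTranslate]
  by_cases hτ : IsRestricted hkm i τ
  · have hτ' := (IsRestricted.inv_mul_iff hkm hσ).2 hτ
    have hmul := restrictPerm_mul hk hkm hi hσ hτ'
    rw [mul_inv_cancel_left] at hmul
    rw [if_pos hτ, if_pos hτ', hmul, inv_mul_cancel_left]
  · rw [if_neg hτ, if_neg (mt (IsRestricted.inv_mul_iff hkm hσ).1 hτ)]

end Restriction

theorem narrow_promote_equivariant {m k d : ℕ} (hk : 1 ≤ k) (hkm : k ≤ m)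
    (i : Fin k → Fin m) (hi : Function.Injective i)
    (σ : Equiv.Perm (Fin m)) (hσ : ⇑σ '' Set.range i = Set.range i)
    (f : Equiv.Perm (Fin m) → Fin d → ℝ) :
    promote hk hkm i (narrow hk hkm i (lTranslate σ f))
      = lTranslate σ (promote hk hkm i (narrow hk hkm i f)) := by
  have hσ' : ∀ x, σ x ∈ range i ↔ x ∈ range i := fun x => by
    rw [← σ.injective.mem_set_image (s := range i) (a := x), hσ]
  rw [narrow_lTranslate hk hkm hi hσ', promote_lTranslate]
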